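/- arXiv:1909.13350 — 2 statements merged into one kernel-verified Lean document; each statement's English description precedes it below -/
import Mathlib

section
/- Let a > 0, b ≥ 0, γ > 1, p ∈ (0,1), and let A, B, P, H > 0 be fixed constants with H > 0. Define g(t) = a·A·t^(1+γ) + t^(3+γ)(b·B + P) - t^(p+γ)·K for t > 0, where K ≥ 0. Then there exists a unique t₀ > 0 such that g(t₀) = H; moreover g(t) < H for 0 < t < t₀ and g(t) > H for t > t₀. -/
theorem stmt_6 (a b γ p A B P K H : ℝ) (ha : 0 < a) (hb : 0 ≤ b)
    (hγ : 1 < γ) (hp0 : 0 < p) (hp1 : p < 1) (hA : 0 < A) (hB : 0 ≤ B)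
    (hP : 0 < P) (hK : 0 ≤ K) (hH : 0 < H)
    (g : ℝ → ℝ)
    (hg : ∀ t, 0 < t → g t = a * A * t ^ (1 + γ) + (b * B + P) * t ^ (3 + γ) - K * t ^ (p + γ)) :
    ∃! t₀ : ℝ, 0 < t₀ ∧ g t₀ = H ∧
      (∀ t, 0 < t → t < t₀ → g t < H) ∧ (∀ t, t₀ < t → g t > H) := by
  set c : ℝ := b * B + P with hc
  have hc0 : 0 < c := add_pos_of_nonneg_of_pos (mul_nonneg hb hB) hP
  set φ : ℝ → ℝ := fun t => a * A * t ^ (1 - p) + c * t ^ (3 - p) - K with hφ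
  have haA : 0 < a * A := mul_pos ha hA
  -- factorization
  have hfac : ∀ t, 0 < t → g t = t ^ (p + γ) * φ t := by
    intro t ht
    have e1 : t ^ (1 + γ) = t ^ (p + γ) * t ^ (1 - p) := by
      rw [← Real.rpow_add ht]; congr 1; ring
    have e2 : t ^ (3 + γ) = t ^ (p + γ) * t ^ (3 - p) := by
      rw [← Real.rpow_add ht]; congr 1; ring
    rw [hg t ht, e1, e2, hφ]; ring
  -- φ strictly increasing on positives
  have hφmono : ∀ s t : ℝ, 0 < s → s < t → φ s < φ t := by
    intro s t hs hst
    have h1 : s ^ (1 - p) < t ^ (1 - p) :=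
      Real.rpow_lt_rpow hs.le hst (by linarith)
    have h2 : s ^ (3 - p) < t ^ (3 - p) :=
      Real.rpow_lt_rpow hs.le hst (by linarith)
    simp only [hφ]
    nlinarith
  -- key comparison
  have key : ∀ s t : ℝ, 0 < s → s < t → 0 < φ t → g s < g t := by
    intro s t hs hst hφt
    have ht : 0 < t := hs.trans hst
    have hps : (0:ℝ) < s ^ (p + γ) := Real.rpow_pos_of_pos hs _
    have hpt : (0:ℝ) < t ^ (p + γ) := Real.rpow_pos_of_pos ht _
    rw [hfac s hs, hfac t ht]
    rcases le_or_gt (φ s) 0 with hφs | hφs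
    · calc s ^ (p + γ) * φ s ≤ 0 := mul_nonpos_of_nonneg_of_nonpos hps.le hφs
        _ < t ^ (p + γ) * φ t := mul_pos hpt hφt
    · have hlt : s ^ (p + γ) < t ^ (p + γ) :=
        Real.rpow_lt_rpow hs.le hst (by linarith)
      exact mul_lt_mul'' hlt (hφmono s t hs hst) hps.le hφs.le
  -- choose t₁ small with g t₁ ≤ H
  have hac : 0 < a * A + c := by linarith
  set t₁ : ℝ := min 1 (H / (a * A + c)) with ht₁def
  have ht₁pos : 0 < t₁ := lt_min one_pos (div_pos hH hac)
  have ht₁le1 : t₁ ≤ 1 := min_le_left _ _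
  have hgt₁ : g t₁ ≤ H := by
    have b1 : t₁ ^ (1 + γ) ≤ t₁ := by
      have := Real.rpow_le_rpow_of_exponent_ge ht₁pos ht₁le1 (by linarith : (1:ℝ) ≤ 1 + γ)
      simpa using this
    have b2 : t₁ ^ (3 + γ) ≤ t₁ := by
      have := Real.rpow_le_rpow_of_exponent_ge ht₁pos ht₁le1 (by linarith : (1:ℝ) ≤ 3 + γ)
      simpa using this
    have b3 : 0 ≤ t₁ ^ (p + γ) := (Real.rpow_pos_of_pos ht₁pos _).le
    have b4 : (a * A + c) * t₁ ≤ H := by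
      have h5 : t₁ ≤ H / (a * A + c) := min_le_right _ _
      calc (a * A + c) * t₁ ≤ (a * A + c) * (H / (a * A + c)) :=
            mul_le_mul_of_nonneg_left h5 hac.le
        _ = H := by field_simp
    rw [hg t₁ ht₁pos]
    nlinarith [mul_le_mul_of_nonneg_left b1 haA.le, mul_le_mul_of_nonneg_left b2 hc0.le,
      mul_nonneg hK b3]
  -- choose t₂ large with H ≤ g t₂
  set M : ℝ := (K + H) / (a * A) with hM
  have hM0 : 0 ≤ M := div_nonneg (by linarith) haA.le
  set t₂ : ℝ := max 1 (M ^ (1 - p)⁻¹) with ht₂def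
  have ht₂1 : (1:ℝ) ≤ t₂ := le_max_left _ _
  have ht₂pos : 0 < t₂ := lt_of_lt_of_le one_pos ht₂1
  have hgt₂ : H ≤ g t₂ := by
    have hMt : M ≤ t₂ ^ (1 - p) := by
      have h1 : M ^ (1 - p)⁻¹ ≤ t₂ := le_max_right _ _
      have h2 : (M ^ (1 - p)⁻¹) ^ (1 - p) ≤ t₂ ^ (1 - p) :=
        Real.rpow_le_rpow (Real.rpow_nonneg hM0 _) h1 (by linarith)
      have h3 : (M ^ (1 - p)⁻¹) ^ (1 - p) = M := by
        rw [← Real.rpow_mul hM0, inv_mul_cancel₀ (by linarith : (1:ℝ) - p ≠ 0), Real.rpow_one]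
      rw [← h3]; exact h2
    have hφt₂ : H ≤ φ t₂ := by
      have h4 : K + H ≤ a * A * t₂ ^ (1 - p) := by
        have := mul_le_mul_of_nonneg_left hMt haA.le
        rwa [hM, mul_div_cancel₀ _ (ne_of_gt haA)] at this
      have h5 : 0 ≤ c * t₂ ^ (3 - p) :=
        mul_nonneg hc0.le (Real.rpow_nonneg ht₂pos.le _)
      simp only [hφ]; linarith
    have hp2 : (1:ℝ) ≤ t₂ ^ (p + γ) :=
      Real.one_le_rpow ht₂1 (by linarith)
    rw [hfac t₂ ht₂pos]
    nlinarith
  -- IVT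
  have ht₁₂ : t₁ ≤ t₂ := ht₁le1.trans ht₂1
  have hcont : ContinuousOn g (Set.Icc t₁ t₂) := by
    have hr : ∀ e : ℝ, ContinuousOn (fun t : ℝ => t ^ e) (Set.Icc t₁ t₂) := by
      intro e x hx
      exact (Real.continuousAt_rpow_const x e
        (Or.inl (ne_of_gt (lt_of_lt_of_le ht₁pos hx.1)))).continuousWithinAt
    have hform : ContinuousOn
        (fun t : ℝ => a * A * t ^ (1 + γ) + c * t ^ (3 + γ) - K * t ^ (p + γ))
        (Set.Icc t₁ t₂) :=
      ((continuousOn_const.mul (hr (1 + γ))).add (continuousOn_const.mul (hr (3 + γ)))).sub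
        (continuousOn_const.mul (hr (p + γ)))
    exact hform.congr fun t ht => hg t (lt_of_lt_of_le ht₁pos ht.1)
  obtain ⟨t₀, ht₀mem, ht₀eq⟩ := intermediate_value_Icc ht₁₂ hcont ⟨hgt₁, hgt₂⟩
  have ht₀pos : 0 < t₀ := lt_of_lt_of_le ht₁pos ht₀mem.1
  have hφt₀ : 0 < φ t₀ := by
    have h1 : t₀ ^ (p + γ) * φ t₀ = H := by rw [← hfac t₀ ht₀pos, ht₀eq]
    have h2 : (0:ℝ) < t₀ ^ (p + γ) := Real.rpow_pos_of_pos ht₀pos _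
    nlinarith
  refine ⟨t₀, ⟨ht₀pos, ht₀eq, ?_, ?_⟩, ?_⟩
  · intro t ht htlt
    have := key t t₀ ht htlt hφt₀
    rwa [ht₀eq] at this
  · intro t htgt
    have hφt : 0 < φ t := hφt₀.trans (hφmono t₀ t ht₀pos htgt)
    have := key t₀ t ht₀pos htgt hφt
    rwa [ht₀eq] at this
  · rintro y ⟨hy0, hyeq, hylt, hygt⟩
    rcases lt_trichotomy y t₀ with h | h | h
    · have := key y t₀ hy0 h hφt₀
      rw [ht₀eq, hyeq] at this
      exact absurd this (lt_irrefl H)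
    · exact h
    · have := hylt t₀ ht₀pos h
      rw [ht₀eq] at this
      exact absurd this (lt_irrefl H)
end

section
/- Let γ > 1 and h ∈ L¹(Ω) with h > 0 a.e., where Ω has finite measure. Suppose (u_n) is a sequence of a.e. positive measurable functions on Ω with u_n → u a.e. and ∫_Ω h·u_n^(1-γ) ≤ K for all n and some constant K. Then u > 0 a.e. in Ω and ∫_Ω h·u^(1-γ) ≤ liminf ∫_Ω h·u_n^(1-γ) ≤ K. -/
/-!
Since `1 - γ < 0`, at a point where `h > 0`, `u_n > 0` and `u_n → 0` the integrands
`h u_n^(1-γ)` blow up, so their liminf is infinite there. By Fatou's lemma that liminf has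
integral at most `K < ∞`, hence is finite a.e., which forces `u > 0` a.e. Off a null set the
integrands then converge to `h u^(1-γ)`, and Fatou's lemma gives the inequality.
-/

open MeasureTheory Filter Topology ENNReal

theorem AEMeasurable.liminf_atTop {α β : Type*} [MeasurableSpace α] {μ : Measure α}
    [CompleteLinearOrder β] [TopologicalSpace β] [OrderTopology β] [SecondCountableTopology β]
    [MeasurableSpace β] [BorelSpace β] {f : ℕ → α → β} (hf : ∀ n, AEMeasurable (f n) μ) :
    AEMeasurable (fun x => liminf (fun n => f n x) atTop) μ := by
  simp_rw [liminf_eq_iSup_iInf_of_nat]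
  exact .iSup fun _ => .biInf _ (Set.to_countable _) fun i _ => hf i

theorem tendsto_mul_rpow_atTop_of_tendsto_zero {ι : Type*} {l : Filter ι} {a : ι → ℝ}
    {c p : ℝ} (hc : 0 < c) (hp : p < 0) (ha : ∀ i, 0 < a i) (ha0 : Tendsto a l (𝓝 0)) :
    Tendsto (fun i => c * a i ^ p) l atTop :=
  ((tendsto_rpow_neg_nhdsGT_zero hp).comp
    (tendsto_nhdsWithin_iff.2 ⟨ha0, Eventually.of_forall ha⟩)).const_mul_atTop hc

theorem pos_of_liminf_ofReal_mul_rpow_lt_top {a : ℕ → ℝ} {b c p : ℝ} (hc : 0 < c) (hp : p < 0)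
    (ha : ∀ n, 0 < a n) (hab : Tendsto a atTop (𝓝 b))
    (hfin : liminf (fun n => ENNReal.ofReal (c * a n ^ p)) atTop < ∞) : 0 < b := by
  have hb : 0 ≤ b := ge_of_tendsto' hab fun n => (ha n).le
  refine hb.lt_of_ne fun hb0 => hfin.ne ?_
  subst hb0
  exact (tendsto_ofReal_nhds_top.2
    (tendsto_mul_rpow_atTop_of_tendsto_zero hc hp ha hab)).liminf_eq

section Measure

variable {α : Type*} [MeasurableSpace α] {μ : Measure α} {h v : α → ℝ} {u : ℕ → α → ℝ} {p : ℝ}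

theorem ae_pos_of_liminf_lintegral_mul_rpow_ne_top (hp : p < 0) (hh : AEMeasurable h μ)
    (hh_pos : ∀ᵐ x ∂μ, 0 < h x) (hu : ∀ n, AEMeasurable (u n) μ)
    (hu_pos : ∀ n, ∀ᵐ x ∂μ, 0 < u n x) (hlim : ∀ᵐ x ∂μ, Tendsto (u · x) atTop (𝓝 (v x)))
    (hbdd : liminf (fun n => ∫⁻ x, ENNReal.ofReal (h x * u n x ^ p) ∂μ) atTop ≠ ∞) :
    ∀ᵐ x ∂μ, 0 < v x := by
  have hF : ∀ n, AEMeasurable (fun x => ENNReal.ofReal (h x * u n x ^ p)) μ := fun n =>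
    (hh.mul ((hu n).pow_const p)).ennreal_ofReal
  have hfin : ∀ᵐ x ∂μ, liminf (fun n => ENNReal.ofReal (h x * u n x ^ p)) atTop < ∞ :=
    ae_lt_top' (AEMeasurable.liminf_atTop hF) ((lintegral_liminf_le' hF).trans_lt hbdd.lt_top).ne
  filter_upwards [hh_pos, ae_all_iff.2 hu_pos, hlim, hfin] with x hhx hux hvx hfinx
  exact pos_of_liminf_ofReal_mul_rpow_lt_top hhx hp hux hvx hfinx

theorem lintegral_ofReal_mul_rpow_le_liminf (hh : AEMeasurable h μ)
    (hu : ∀ n, AEMeasurable (u n) μ) (hlim : ∀ᵐ x ∂μ, Tendsto (u · x) atTop (𝓝 (v x)))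
    (hv : ∀ᵐ x ∂μ, 0 < v x) :
    ∫⁻ x, ENNReal.ofReal (h x * v x ^ p) ∂μ ≤
      liminf (fun n => ∫⁻ x, ENNReal.ofReal (h x * u n x ^ p) ∂μ) atTop := by
  have hF : ∀ n, AEMeasurable (fun x => ENNReal.ofReal (h x * u n x ^ p)) μ := fun n =>
    (hh.mul ((hu n).pow_const p)).ennreal_ofReal
  have hlim_F : ∀ᵐ x ∂μ, liminf (fun n => ENNReal.ofReal (h x * u n x ^ p)) atTop =
      ENNReal.ofReal (h x * v x ^ p) := by
    filter_upwards [hlim, hv] with x hvx hx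
    exact (ENNReal.tendsto_ofReal ((hvx.rpow_const (Or.inl hx.ne')).const_mul (h x))).liminf_eq
  calc ∫⁻ x, ENNReal.ofReal (h x * v x ^ p) ∂μ
      = ∫⁻ x, liminf (fun n => ENNReal.ofReal (h x * u n x ^ p)) atTop ∂μ :=
        lintegral_congr_ae (hlim_F.mono fun _ hx => hx.symm)
    _ ≤ _ := lintegral_liminf_le' hF

end Measure

theorem stmt_15_general {N : ℕ} (Ω : Set (EuclideanSpace ℝ (Fin N)))
    (γ : ℝ) (hγ : 1 < γ)
    (h : EuclideanSpace ℝ (Fin N) → ℝ) (hh : IntegrableOn h Ω)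
    (hhpos : ∀ᵐ x ∂(volume.restrict Ω), 0 < h x)
    (un : ℕ → EuclideanSpace ℝ (Fin N) → ℝ) (u : EuclideanSpace ℝ (Fin N) → ℝ)
    (hmeas : ∀ n, Measurable (un n))
    (hpos : ∀ n, ∀ᵐ x ∂(volume.restrict Ω), 0 < un n x)
    (hae : ∀ᵐ x ∂(volume.restrict Ω), Tendsto (fun n => un n x) atTop (nhds (u x)))
    (K : ℝ)
    (hK : ∀ n, (∫⁻ x in Ω, ENNReal.ofReal (h x * un n x ^ (1 - γ))) ≤ ENNReal.ofReal K) :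
    (∀ᵐ x ∂(volume.restrict Ω), 0 < u x) ∧
    (∫⁻ x in Ω, ENNReal.ofReal (h x * u x ^ (1 - γ))) ≤
      atTop.liminf (fun n => ∫⁻ x in Ω, ENNReal.ofReal (h x * un n x ^ (1 - γ))) ∧
    atTop.liminf (fun n => ∫⁻ x in Ω, ENNReal.ofReal (h x * un n x ^ (1 - γ))) ≤
      ENNReal.ofReal K := by
  have hp : 1 - γ < 0 := by linarith
  have hun : ∀ n, AEMeasurable (un n) (volume.restrict Ω) := fun n => (hmeas n).aemeasurable
  have hliminf_le : atTop.liminf (fun n => ∫⁻ x in Ω, ENNReal.ofReal (h x * un n x ^ (1 - γ)))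
      ≤ ENNReal.ofReal K :=
    liminf_le_of_frequently_le' (Frequently.of_forall hK)
  have hu_pos : ∀ᵐ x ∂(volume.restrict Ω), 0 < u x :=
    ae_pos_of_liminf_lintegral_mul_rpow_ne_top hp hh.aemeasurable hhpos hun hpos hae
      (hliminf_le.trans_lt ofReal_lt_top).ne
  exact ⟨hu_pos, lintegral_ofReal_mul_rpow_le_liminf hh.aemeasurable hun hae hu_pos, hliminf_le⟩

theorem stmt_15 {N : ℕ} (Ω : Set (EuclideanSpace ℝ (Fin N))) (hΩ : MeasurableSet Ω)
    (hΩfin : volume Ω < ⊤) (γ : ℝ) (hγ : 1 < γ)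
    (h : EuclideanSpace ℝ (Fin N) → ℝ) (hh : IntegrableOn h Ω)
    (hhpos : ∀ᵐ x ∂(volume.restrict Ω), 0 < h x)
    (un : ℕ → EuclideanSpace ℝ (Fin N) → ℝ) (u : EuclideanSpace ℝ (Fin N) → ℝ)
    (hmeas : ∀ n, Measurable (un n))
    (hpos : ∀ n, ∀ᵐ x ∂(volume.restrict Ω), 0 < un n x)
    (hae : ∀ᵐ x ∂(volume.restrict Ω), Tendsto (fun n => un n x) atTop (nhds (u x)))
    (K : ℝ)
    (hK : ∀ n, (∫⁻ x in Ω, ENNReal.ofReal (h x * un n x ^ (1 - γ))) ≤ ENNReal.ofReal K) :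
    (∀ᵐ x ∂(volume.restrict Ω), 0 < u x) ∧
    (∫⁻ x in Ω, ENNReal.ofReal (h x * u x ^ (1 - γ))) ≤
      atTop.liminf (fun n => ∫⁻ x in Ω, ENNReal.ofReal (h x * un n x ^ (1 - γ))) ∧
    atTop.liminf (fun n => ∫⁻ x in Ω, ENNReal.ofReal (h x * un n x ^ (1 - γ))) ≤
      ENNReal.ofReal K :=
  stmt_15_general Ω γ hγ h hh hhpos un u hmeas hpos hae K hK
end
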